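/- arXiv:2412.00780 — 2 statements merged into one kernel-verified Lean document; each statement's English description precedes it below -/
import Mathlib

section
/- Let 1 < α < 2, ρ > 0, R > 0 and 0 < β < 1, and let λ₁ ≥ 0 be the unique solution of θ(λ₁) = R. Then there exist constants c, C > 0, depending only on α, ρ and β, such that for every λ ∈ ℝ with λ ∉ (β·λ₁, β^{−1}·λ₁) one has c·(|λ| + λ₁)/(|λ| + λ₁ + 1)^{2−α} ≤ |ψ_R′(λ)| ≤ C·(|λ| + λ₁)/(|λ| + λ₁ + 1)^{2−α}. -/
/-- `θ(λ) = α·λ·(λ² + ρ²)^{−(1−α/2)}`. -/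
noncomputable def theta (α ρ lam : ℝ) : ℝ :=
  α * lam * (lam ^ 2 + ρ ^ 2) ^ (-(1 - α / 2))

/-- The phase `ψ_R(λ) = (λ² + ρ²)^{α/2} − R·λ`, so that `ψ_R′(λ) = θ(λ) − R`. -/
noncomputable def psi (α ρ R lam : ℝ) : ℝ :=
  (lam ^ 2 + ρ ^ 2) ^ (α / 2) - R * lam

private lemma theta_neg (α ρ x : ℝ) : theta α ρ (-x) = -theta α ρ x := by
  simp only [theta, neg_sq]
  ring

private lemma theta_nonneg (α ρ : ℝ) (hα : 0 < α) {t : ℝ} (ht : 0 ≤ t) :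
    0 ≤ theta α ρ t := by
  unfold theta
  positivity

/-- derivative of psi -/
private lemma deriv_psi (α ρ : ℝ) (hρ : 0 < ρ) (R lam : ℝ) :
    deriv (psi α ρ R) lam = theta α ρ lam - R := by
  have hpos : (0:ℝ) < lam ^ 2 + ρ ^ 2 := by positivity
  have h1 : HasDerivAt (fun x : ℝ => x ^ 2 + ρ ^ 2) (2 * lam) lam := by
    simpa using (hasDerivAt_pow 2 lam).add_const (ρ ^ 2)
  have h2 : HasDerivAt (fun x : ℝ => (x ^ 2 + ρ ^ 2) ^ (α / 2))
      (2 * lam * (α / 2) * (lam ^ 2 + ρ ^ 2) ^ (α / 2 - 1)) lam :=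
    h1.rpow_const (Or.inl hpos.ne')
  have h3 : HasDerivAt (fun x : ℝ => R * x) R lam := by
    simpa using (hasDerivAt_id lam).const_mul R
  have h4 : HasDerivAt (psi α ρ R)
      (2 * lam * (α / 2) * (lam ^ 2 + ρ ^ 2) ^ (α / 2 - 1) - R) lam := h2.sub h3
  rw [h4.deriv]
  unfold theta
  rw [show -(1 - α / 2) = α / 2 - 1 by ring]
  ring

/-- scaling bound : θ(γt) ≤ γ^(α-1) θ(t) for 0 < γ ≤ 1, t ≥ 0. -/
private lemma theta_scale (α ρ : ℝ) (hα1 : 1 < α) (hα2 : α < 2) (hρ : 0 < ρ)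
    {γ t : ℝ} (hγ0 : 0 < γ) (hγ1 : γ ≤ 1) (ht : 0 ≤ t) :
    theta α ρ (γ * t) ≤ γ ^ (α - 1) * theta α ρ t := by
  have he : -(1 - α / 2) ≤ 0 := by linarith
  have hγ2 : γ ^ 2 ≤ 1 := by nlinarith
  have h1 : γ ^ 2 * (t ^ 2 + ρ ^ 2) ≤ (γ * t) ^ 2 + ρ ^ 2 := by
    nlinarith [mul_le_mul_of_nonneg_right hγ2 (sq_nonneg ρ)]
  have h1' : (0:ℝ) < γ ^ 2 * (t ^ 2 + ρ ^ 2) := by positivity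
  have h2 : ((γ * t) ^ 2 + ρ ^ 2) ^ (-(1 - α / 2))
      ≤ (γ ^ 2 * (t ^ 2 + ρ ^ 2)) ^ (-(1 - α / 2)) :=
    Real.rpow_le_rpow_of_nonpos h1' h1 he
  have h3 : (γ ^ 2 * (t ^ 2 + ρ ^ 2)) ^ (-(1 - α / 2))
      = γ ^ (α - 2) * (t ^ 2 + ρ ^ 2) ^ (-(1 - α / 2)) := by
    rw [Real.mul_rpow (by positivity) (by positivity)]
    congr 1
    rw [← Real.rpow_natCast γ 2, ← Real.rpow_mul hγ0.le]
    congr 1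
    push_cast; ring
  have h4 : theta α ρ (γ * t)
      ≤ α * (γ * t) * (γ ^ (α - 2) * (t ^ 2 + ρ ^ 2) ^ (-(1 - α / 2))) := by
    unfold theta
    exact mul_le_mul_of_nonneg_left (h2.trans_eq h3) (by positivity)
  have h5 : α * (γ * t) * (γ ^ (α - 2) * (t ^ 2 + ρ ^ 2) ^ (-(1 - α / 2)))
      = γ ^ (α - 1) * theta α ρ t := by
    unfold theta
    rw [show α - 1 = (α - 2) + 1 by ring, Real.rpow_add_one hγ0.ne']
    ring
  linarith [h4.trans_eq h5]

/-- lower comparison : cl·t(t+1)^(α-2) ≤ θ(t). -/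
private lemma theta_lower (α ρ : ℝ) (hα1 : 1 < α) (hα2 : α < 2) (hρ : 0 < ρ)
    {t : ℝ} (ht : 0 ≤ t) :
    α * (max 1 (ρ ^ 2)) ^ ((α - 2) / 2) * (t * (t + 1) ^ (α - 2)) ≤ theta α ρ t := by
  have hM1 : (1:ℝ) ≤ max 1 (ρ ^ 2) := le_max_left _ _
  have hM2 : ρ ^ 2 ≤ max 1 (ρ ^ 2) := le_max_right _ _
  have hM : t ^ 2 + ρ ^ 2 ≤ max 1 (ρ ^ 2) * (t + 1) ^ 2 := by nlinarith
  have hpos : (0:ℝ) < t ^ 2 + ρ ^ 2 := by positivity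
  have h2 : (max 1 (ρ ^ 2) * (t + 1) ^ 2) ^ (-(1 - α / 2))
      ≤ (t ^ 2 + ρ ^ 2) ^ (-(1 - α / 2)) :=
    Real.rpow_le_rpow_of_nonpos hpos hM (by linarith)
  have h3 : (max 1 (ρ ^ 2) * (t + 1) ^ 2) ^ (-(1 - α / 2))
      = (max 1 (ρ ^ 2)) ^ ((α - 2) / 2) * (t + 1) ^ (α - 2) := by
    rw [Real.mul_rpow (by positivity) (by positivity)]
    congr 1
    · congr 1; ring
    · rw [← Real.rpow_natCast (t + 1) 2, ← Real.rpow_mul (by linarith)]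
      congr 1; push_cast; ring
  calc α * (max 1 (ρ ^ 2)) ^ ((α - 2) / 2) * (t * (t + 1) ^ (α - 2))
      = α * t * ((max 1 (ρ ^ 2)) ^ ((α - 2) / 2) * (t + 1) ^ (α - 2)) := by ring
    _ ≤ α * t * ((t ^ 2 + ρ ^ 2) ^ (-(1 - α / 2))) := by
        refine mul_le_mul_of_nonneg_left ?_ (by positivity)
        rw [← h3]; exact h2
    _ = theta α ρ t := by rw [theta]

/-- upper comparison : θ(t) ≤ Cu·t(t+1)^(α-2). -/
private lemma theta_upper (α ρ : ℝ) (hα1 : 1 < α) (hα2 : α < 2) (hρ : 0 < ρ)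
    {t : ℝ} (ht : 0 ≤ t) :
    theta α ρ t ≤ α * (min 1 (ρ ^ 2) / 2) ^ ((α - 2) / 2) * (t * (t + 1) ^ (α - 2)) := by
  have hm1 : min 1 (ρ ^ 2) ≤ 1 := min_le_left _ _
  have hm2 : min 1 (ρ ^ 2) ≤ ρ ^ 2 := min_le_right _ _
  have hm0 : (0:ℝ) < min 1 (ρ ^ 2) := lt_min one_pos (by positivity)
  have hm : min 1 (ρ ^ 2) / 2 * (t + 1) ^ 2 ≤ t ^ 2 + ρ ^ 2 := by
    nlinarith [mul_le_mul_of_nonneg_right hm1 (sq_nonneg t), sq_nonneg (t - 1)]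
  have hpos : (0:ℝ) < min 1 (ρ ^ 2) / 2 * (t + 1) ^ 2 := by positivity
  have h2 : (t ^ 2 + ρ ^ 2) ^ (-(1 - α / 2))
      ≤ (min 1 (ρ ^ 2) / 2 * (t + 1) ^ 2) ^ (-(1 - α / 2)) :=
    Real.rpow_le_rpow_of_nonpos hpos hm (by linarith)
  have h3 : (min 1 (ρ ^ 2) / 2 * (t + 1) ^ 2) ^ (-(1 - α / 2))
      = (min 1 (ρ ^ 2) / 2) ^ ((α - 2) / 2) * (t + 1) ^ (α - 2) := by
    rw [Real.mul_rpow (by positivity) (by positivity)]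
    congr 1
    · congr 1; ring
    · rw [← Real.rpow_natCast (t + 1) 2, ← Real.rpow_mul (by linarith)]
      congr 1; push_cast; ring
  have step : α * t * ((t ^ 2 + ρ ^ 2) ^ (-(1 - α / 2)))
      ≤ α * t * ((min 1 (ρ ^ 2) / 2) ^ ((α - 2) / 2) * (t + 1) ^ (α - 2)) := by
    refine mul_le_mul_of_nonneg_left ?_ (by positivity)
    rw [← h3]; exact h2
  calc theta α ρ t = α * t * ((t ^ 2 + ρ ^ 2) ^ (-(1 - α / 2))) := by rw [theta]
    _ ≤ α * t * ((min 1 (ρ ^ 2) / 2) ^ ((α - 2) / 2) * (t + 1) ^ (α - 2)) := step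
    _ = α * (min 1 (ρ ^ 2) / 2) ^ ((α - 2) / 2) * (t * (t + 1) ^ (α - 2)) := by ring

/-- monotonicity of h(t) = t(t+1)^(α-2) on [0,∞). -/
private lemma h_mono (α : ℝ) (hα1 : 1 < α) (hα2 : α < 2) {x y : ℝ} (hx : 0 ≤ x)
    (hxy : x ≤ y) :
    x * (x + 1) ^ (α - 2) ≤ y * (y + 1) ^ (α - 2) := by
  rcases hx.lt_or_eq with h0 | h0
  · -- 0 < x ≤ y
    have hy : 0 < y := h0.trans_le hxy
    have hx1 : (0:ℝ) < x + 1 := by linarith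
    have hy1 : (0:ℝ) < y + 1 := by linarith
    have e1 : (x + 1) ^ (α - 2) = ((x + 1) ^ (2 - α))⁻¹ := by
      rw [show α - 2 = -(2 - α) by ring, Real.rpow_neg hx1.le]
    have e2 : (y + 1) ^ (α - 2) = ((y + 1) ^ (2 - α))⁻¹ := by
      rw [show α - 2 = -(2 - α) by ring, Real.rpow_neg hy1.le]
    rw [e1, e2, ← div_eq_mul_inv, ← div_eq_mul_inv,
      div_le_div_iff₀ (Real.rpow_pos_of_pos hx1 _) (Real.rpow_pos_of_pos hy1 _)]
    -- goal: x * (y+1)^(2-α) ≤ y * (x+1)^(2-α)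
    have ha : (1:ℝ) ≤ (y + 1) / (x + 1) := (one_le_div hx1).mpr (by linarith)
    have k2 : ((y + 1) / (x + 1)) ^ (2 - α) ≤ (y + 1) / (x + 1) := by
      calc ((y + 1) / (x + 1)) ^ (2 - α) ≤ ((y + 1) / (x + 1)) ^ (1:ℝ) :=
            Real.rpow_le_rpow_of_exponent_le ha (by linarith)
        _ = (y + 1) / (x + 1) := Real.rpow_one _
    have k3 : (y + 1) / (x + 1) ≤ y / x := by
      rw [div_le_div_iff₀ hx1 h0]; nlinarith
    have k4 : ((y + 1) / (x + 1)) ^ (2 - α) = (y + 1) ^ (2 - α) / (x + 1) ^ (2 - α) :=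
      Real.div_rpow hy1.le hx1.le _
    have k5 : (y + 1) ^ (2 - α) / (x + 1) ^ (2 - α) ≤ y / x := by
      rw [← k4]; exact k2.trans k3
    rw [div_le_div_iff₀ (Real.rpow_pos_of_pos hx1 _) h0] at k5
    linarith
  · rw [← h0]
    have hy : 0 ≤ y := le_of_eq h0 |>.trans hxy
    have : 0 ≤ y * (y + 1) ^ (α - 2) := by positivity
    simpa using this

/-- doubling : h(2t) ≤ 2 h(t). -/
private lemma h_double (α : ℝ) (hα2 : α < 2) {t : ℝ} (ht : 0 ≤ t) :
    (2 * t) * (2 * t + 1) ^ (α - 2) ≤ 2 * (t * (t + 1) ^ (α - 2)) := by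
  have h1 : (2 * t + 1) ^ (α - 2) ≤ (t + 1) ^ (α - 2) :=
    Real.rpow_le_rpow_of_nonpos (by linarith) (by linarith) (by linarith)
  nlinarith [Real.rpow_nonneg (by linarith : (0:ℝ) ≤ 2 * t + 1) (α - 2)]

/-- subadditivity-type bound : h(a+b) ≤ 2(h(a)+h(b)). -/
private lemma h_add (α : ℝ) (hα1 : 1 < α) (hα2 : α < 2) {a b : ℝ} (ha : 0 ≤ a)
    (hb : 0 ≤ b) :
    (a + b) * (a + b + 1) ^ (α - 2)
      ≤ 2 * (a * (a + 1) ^ (α - 2) + b * (b + 1) ^ (α - 2)) := by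
  rcases le_total a b with hab | hab
  · have h1 : (a + b) * (a + b + 1) ^ (α - 2) ≤ (2 * b) * (2 * b + 1) ^ (α - 2) :=
      h_mono α hα1 hα2 (by linarith) (by linarith)
    have h2 := h_double α hα2 hb
    have h3 : 0 ≤ a * (a + 1) ^ (α - 2) := by positivity
    linarith
  · have h1 : (a + b) * (a + b + 1) ^ (α - 2) ≤ (2 * a) * (2 * a + 1) ^ (α - 2) :=
      h_mono α hα1 hα2 (by linarith) (by linarith)
    have h2 := h_double α hα2 ha
    have h3 : 0 ≤ b * (b + 1) ^ (α - 2) := by positivity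
    linarith

theorem stmt2 (α ρ β : ℝ) (hα1 : 1 < α) (hα2 : α < 2) (hρ : 0 < ρ)
    (hβ0 : 0 < β) (hβ1 : β < 1) :
    ∃ c C : ℝ, 0 < c ∧ 0 < C ∧
      ∀ R lam1 : ℝ, 0 < R → 0 ≤ lam1 → theta α ρ lam1 = R →
        ∀ lam : ℝ, lam ∉ Set.Ioo (β * lam1) (β⁻¹ * lam1) →
          c * ((|lam| + lam1) / (|lam| + lam1 + 1) ^ (2 - α))
              ≤ |deriv (psi α ρ R) lam| ∧
          |deriv (psi α ρ R) lam|
              ≤ C * ((|lam| + lam1) / (|lam| + lam1 + 1) ^ (2 - α)) := by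
  have hα0 : (0:ℝ) < α := by linarith
  set cl : ℝ := α * (max 1 (ρ ^ 2)) ^ ((α - 2) / 2) with hcl
  set Cu : ℝ := α * (min 1 (ρ ^ 2) / 2) ^ ((α - 2) / 2) with hCu
  have hm0 : (0:ℝ) < min 1 (ρ ^ 2) := lt_min one_pos (by positivity)
  have hclpos : 0 < cl := by
    have := Real.rpow_pos_of_pos (show (0:ℝ) < max 1 (ρ ^ 2) by positivity) ((α - 2) / 2)
    positivity
  have hCupos : 0 < Cu := by
    have := Real.rpow_pos_of_pos (show (0:ℝ) < min 1 (ρ ^ 2) / 2 by positivity) ((α - 2) / 2)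
    positivity
  have hq1 : β ^ (α - 1) < 1 := Real.rpow_lt_one hβ0.le hβ1 (by linarith)
  have hq0 : 0 < β ^ (α - 1) := Real.rpow_pos_of_pos hβ0 _
  refine ⟨(1 - β ^ (α - 1)) * cl / 2, 2 * Cu,
    div_pos (mul_pos (by linarith) hclpos) two_pos, by positivity, ?_⟩
  intro R lam1 hR hl1 hθ1 lam hnot
  have hl1' : 0 < lam1 := by
    rcases hl1.lt_or_eq with h | h
    · exact h
    · exfalso
      rw [← h] at hθ1
      simp [theta] at hθ1
      linarith
  set s : ℝ := |lam| with hsdef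
  have hs : 0 ≤ s := abs_nonneg lam
  have hx1 : (0:ℝ) < s + lam1 + 1 := by positivity
  -- rewrite the goal expression
  have hgform : (s + lam1) / (s + lam1 + 1) ^ (2 - α)
      = (s + lam1) * (s + lam1 + 1) ^ (α - 2) := by
    rw [show (2 - α) = -(α - 2) by ring, Real.rpow_neg hx1.le, div_eq_mul_inv, inv_inv]
  set g : ℝ := (s + lam1) * (s + lam1 + 1) ^ (α - 2) with hg
  have hgnn : 0 ≤ g := by positivity
  have hds : deriv (psi α ρ R) lam = theta α ρ lam - theta α ρ lam1 := by
    rw [deriv_psi α ρ hρ R lam, hθ1]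
  have habs_theta : |theta α ρ lam| = theta α ρ s := by
    rcases abs_cases lam with ⟨h1, h2⟩ | ⟨h1, h2⟩
    · rw [hsdef, h1]
      exact abs_of_nonneg (theta_nonneg α ρ hα0 h2)
    · have hnn : 0 ≤ theta α ρ (-lam) := theta_nonneg α ρ hα0 (by linarith)
      rw [theta_neg] at hnn
      rw [hsdef, h1, theta_neg, abs_of_nonpos (by linarith)]
  -- upper bound (valid always)
  have hupper : |deriv (psi α ρ R) lam| ≤ 2 * Cu * g := by
    rw [hds]
    have h1 : |theta α ρ lam - theta α ρ lam1| ≤ theta α ρ s + theta α ρ lam1 := by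
      calc |theta α ρ lam - theta α ρ lam1| ≤ |theta α ρ lam| + |theta α ρ lam1| :=
            abs_sub _ _
        _ = theta α ρ s + theta α ρ lam1 := by
            rw [habs_theta, abs_of_nonneg (theta_nonneg α ρ hα0 hl1'.le)]
    have h2 : theta α ρ s ≤ Cu * (s * (s + 1) ^ (α - 2)) := theta_upper α ρ hα1 hα2 hρ hs
    have h3 : theta α ρ lam1 ≤ Cu * (lam1 * (lam1 + 1) ^ (α - 2)) :=
      theta_upper α ρ hα1 hα2 hρ hl1'.le
    have h4 : s * (s + 1) ^ (α - 2) ≤ g := h_mono α hα1 hα2 hs (by linarith)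
    have h5 : lam1 * (lam1 + 1) ^ (α - 2) ≤ g := h_mono α hα1 hα2 hl1'.le (by linarith)
    have h4' := mul_le_mul_of_nonneg_left h4 hCupos.le
    have h5' := mul_le_mul_of_nonneg_left h5 hCupos.le
    linarith
  -- lower bound
  have hnot' : lam ≤ β * lam1 ∨ β⁻¹ * lam1 ≤ lam := by
    by_contra h
    push_neg at h
    exact hnot ⟨h.1, h.2⟩
  have hq1' : (0:ℝ) ≤ 1 - β ^ (α - 1) := by linarith
  have hlower : (1 - β ^ (α - 1)) * cl / 2 * g ≤ |deriv (psi α ρ R) lam| := by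
    rw [hds]
    rcases hnot' with hcase | hcase
    · rcases le_or_gt lam 0 with hneg | hposl
      · -- lam ≤ 0
        have hθlam : theta α ρ lam = -theta α ρ s := by
          rw [hsdef, abs_of_nonpos hneg, theta_neg, neg_neg]
        have hD : theta α ρ lam1 - theta α ρ lam = theta α ρ lam1 + theta α ρ s := by
          rw [hθlam]; ring
        have h1 : cl * (lam1 * (lam1 + 1) ^ (α - 2)) ≤ theta α ρ lam1 :=
          theta_lower α ρ hα1 hα2 hρ hl1'.le
        have h2 : cl * (s * (s + 1) ^ (α - 2)) ≤ theta α ρ s :=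
          theta_lower α ρ hα1 hα2 hρ hs
        have h3 := h_add α hα1 hα2 hs hl1'.le
        have h3' := mul_le_mul_of_nonneg_left h3 hclpos.le
        have hDnn : 0 ≤ theta α ρ lam1 + theta α ρ s :=
          add_nonneg (theta_nonneg α ρ hα0 hl1'.le) (theta_nonneg α ρ hα0 hs)
        have habs : |theta α ρ lam - theta α ρ lam1| = theta α ρ lam1 + theta α ρ s := by
          rw [abs_sub_comm,
            abs_of_nonneg (show 0 ≤ theta α ρ lam1 - theta α ρ lam by linarith)]
          exact hD
        rw [habs]
        have step1 : cl * g ≤ 2 * (theta α ρ s + theta α ρ lam1) := by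
          rw [hg]; linarith
        have hqclg : 0 ≤ β ^ (α - 1) * (cl * g) :=
          mul_nonneg hq0.le (mul_nonneg hclpos.le hgnn)
        linarith [step1, hqclg]
      · -- 0 < lam ≤ β * lam1
        have hslam : s = lam := abs_of_pos hposl
        have hγ0 : 0 < lam / lam1 := div_pos hposl hl1'
        have hγβ : lam / lam1 ≤ β := (div_le_iff₀ hl1').mpr (by linarith)
        have hγ1 : lam / lam1 ≤ 1 := hγβ.trans hβ1.le
        have hsc : theta α ρ lam ≤ (lam / lam1) ^ (α - 1) * theta α ρ lam1 := by
          have := theta_scale α ρ hα1 hα2 hρ hγ0 hγ1 hl1'.le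
          rwa [div_mul_cancel₀ _ hl1'.ne'] at this
        have hγβ' : (lam / lam1) ^ (α - 1) ≤ β ^ (α - 1) :=
          Real.rpow_le_rpow hγ0.le hγβ (by linarith)
        have hθl1 : 0 ≤ theta α ρ lam1 := theta_nonneg α ρ hα0 hl1'.le
        have hq : theta α ρ lam ≤ β ^ (α - 1) * theta α ρ lam1 := by
          have := mul_le_mul_of_nonneg_right hγβ' hθl1
          linarith
        have hD : 0 ≤ theta α ρ lam1 - theta α ρ lam := by
          have h := mul_nonneg hq1' hθl1
          linarith [h, hq]
        have habs : |theta α ρ lam - theta α ρ lam1|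
            = theta α ρ lam1 - theta α ρ lam := by
          rw [abs_sub_comm, abs_of_nonneg hD]
        rw [habs]
        have h1 : cl * (lam1 * (lam1 + 1) ^ (α - 2)) ≤ theta α ρ lam1 :=
          theta_lower α ρ hα1 hα2 hρ hl1'.le
        have h2 : g ≤ (2 * lam1) * (2 * lam1 + 1) ^ (α - 2) := by
          rw [hg]
          refine h_mono α hα1 hα2 (by linarith) ?_
          have hll : lam ≤ lam1 := by
            have := mul_nonneg (show (0:ℝ) ≤ 1 - β by linarith) hl1'.le
            linarith
          rw [hslam]; linarith
        have h3 := h_double α hα2 hl1'.le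
        have h4 : g ≤ 2 * (lam1 * (lam1 + 1) ^ (α - 2)) := h2.trans h3
        have h4' := mul_le_mul_of_nonneg_left h4 hclpos.le
        have h5 : cl * g ≤ 2 * theta α ρ lam1 := by linarith
        have h6 := mul_le_mul_of_nonneg_left h5 hq1'
        linarith [h6, hq]
    · -- β⁻¹ * lam1 ≤ lam
      have hβinv : 0 < β⁻¹ := inv_pos.mpr hβ0
      have hlampos : 0 < lam := lt_of_lt_of_le (mul_pos hβinv hl1') hcase
      have hslam : s = lam := abs_of_pos hlampos
      have hl1lam : lam1 ≤ β * lam := by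
        have h := mul_le_mul_of_nonneg_left hcase hβ0.le
        rw [← mul_assoc, mul_inv_cancel₀ hβ0.ne', one_mul] at h
        exact h
      have hl1lam' : lam1 ≤ lam := by
        have := mul_nonneg (show (0:ℝ) ≤ 1 - β by linarith) hlampos.le
        linarith
      have hγ0 : 0 < lam1 / lam := div_pos hl1' hlampos
      have hγβ : lam1 / lam ≤ β := (div_le_iff₀ hlampos).mpr (by linarith)
      have hγ1 : lam1 / lam ≤ 1 := hγβ.trans hβ1.le
      have hsc : theta α ρ lam1 ≤ (lam1 / lam) ^ (α - 1) * theta α ρ lam := by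
        have := theta_scale α ρ hα1 hα2 hρ hγ0 hγ1 hlampos.le
        rwa [div_mul_cancel₀ _ hlampos.ne'] at this
      have hγβ' : (lam1 / lam) ^ (α - 1) ≤ β ^ (α - 1) :=
        Real.rpow_le_rpow hγ0.le hγβ (by linarith)
      have hθl : 0 ≤ theta α ρ lam := theta_nonneg α ρ hα0 hlampos.le
      have hq : theta α ρ lam1 ≤ β ^ (α - 1) * theta α ρ lam := by
        have := mul_le_mul_of_nonneg_right hγβ' hθl
        linarith
      have hD : 0 ≤ theta α ρ lam - theta α ρ lam1 := by
        have h := mul_nonneg hq1' hθl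
        linarith [h, hq]
      rw [abs_of_nonneg hD]
      have h1 : cl * (lam * (lam + 1) ^ (α - 2)) ≤ theta α ρ lam :=
        theta_lower α ρ hα1 hα2 hρ hlampos.le
      have h2 : g ≤ (2 * lam) * (2 * lam + 1) ^ (α - 2) := by
        rw [hg, hslam]
        exact h_mono α hα1 hα2 (by linarith) (by linarith)
      have h3 := h_double α hα2 hlampos.le
      have h4 : g ≤ 2 * (lam * (lam + 1) ^ (α - 2)) := h2.trans h3
      have h4' := mul_le_mul_of_nonneg_left h4 hclpos.le
      have h5 : cl * g ≤ 2 * theta α ρ lam := by linarith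
      have h6 := mul_le_mul_of_nonneg_left h5 hq1'
      linarith [h6, hq]
  constructor
  · rw [hgform]; exact hlower
  · rw [hgform]; exact hupper
end

section
/- Let 0 < α < 1 and ρ > 0, set λ₀ = ρ/√(1−α) and θ₀ = θ(λ₀), and let 0 < R < θ₀. Then the phase ψ_R has exactly two stationary points in (0,∞): λ₁ ∈ (0, λ₀) and λ₂ ∈ (λ₀, ∞) (the two solutions of θ(λ) = R). Moreover there exist constants c, C > 0, depending only on α and ρ, such that c·R ≤ λ₁ ≤ C·R and c·R^{−1/(1−α)} ≤ λ₂ ≤ C·R^{−1/(1−α)}; in addition θ(λ) ≤ α·(λ² + ρ²)^{−(1−α)/2} for all λ ≥ 0, and consequently λ₂ ≤ √(λ₂² + ρ²) ≤ (R/α)^{−1/(1−α)}. -/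
open Filter Set Topology

lemma exists_pair_eq_of_strictMonoOn_of_strictAntiOn {f : ℝ → ℝ} {a R : ℝ}
    (hf : ContinuousOn f (Ici 0)) (ha : 0 ≤ a)
    (hmono : StrictMonoOn f (Icc 0 a)) (hanti : StrictAntiOn f (Ici a))
    (hR0 : f 0 < R) (hRa : R < f a) (hlim : ∀ᶠ x in atTop, f x < R) :
    ∃ x₁ x₂, x₁ ∈ Ioo 0 a ∧ x₂ ∈ Ioi a ∧ f x₁ = R ∧ f x₂ = R ∧
      ∀ x, 0 < x → f x = R → x = x₁ ∨ x = x₂ := by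
  obtain ⟨x₁, hx₁, hfx₁⟩ := intermediate_value_Ioo ha (hf.mono Icc_subset_Ici_self) ⟨hR0, hRa⟩
  obtain ⟨M, hfM, haM⟩ := (hlim.and (eventually_gt_atTop a)).exists
  obtain ⟨x₂, hx₂, hfx₂⟩ := intermediate_value_Ioo' haM.le
    (hf.mono (Icc_subset_Ici_self.trans (Ici_subset_Ici.2 ha))) ⟨hfM, hRa⟩
  refine ⟨x₁, x₂, hx₁, hx₂.1, hfx₁, hfx₂, fun x hx hfx => ?_⟩
  rcases lt_trichotomy x a with hxa | rfl | hxa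
  · exact .inl (hmono.injOn ⟨hx.le, hxa.le⟩ (Ioo_subset_Icc_self hx₁) (hfx.trans hfx₁.symm))
  · exact absurd hfx hRa.ne'
  · exact .inr (hanti.injOn hxa.le hx₂.1.le (hfx.trans hfx₂.symm))

lemma div_rpow_neg_eq_rpow_mul {a b : ℝ} (ha : 0 ≤ a) (hb : 0 ≤ b) (s : ℝ) :
    (a / b) ^ (-s) = b ^ s * a ^ (-s) := by
  rw [Real.div_rpow ha hb, Real.rpow_neg hb, div_inv_eq_mul, mul_comm]

section Theta

variable {α ρ x : ℝ}

lemma continuous_theta (hρ : 0 < ρ) : Continuous (theta α ρ) := by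
  unfold theta
  exact (continuous_const.mul continuous_id).mul
    (Continuous.rpow_const (by fun_prop) fun x => .inl (by positivity))

lemma hasDerivAt_theta (hρ : 0 < ρ) (x : ℝ) :
    HasDerivAt (theta α ρ)
      (α * (x ^ 2 + ρ ^ 2) ^ (-(1 - α / 2) - 1) * (ρ ^ 2 - (1 - α) * x ^ 2)) x := by
  have hb : 0 < x ^ 2 + ρ ^ 2 := by positivity
  have hsq : HasDerivAt (fun l : ℝ => l ^ 2 + ρ ^ 2) (2 * x) x := by
    simpa using (hasDerivAt_pow 2 x).add_const (ρ ^ 2)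
  have hpow := hsq.rpow_const (p := -(1 - α / 2)) (.inl hb.ne')
  have hlin : HasDerivAt (fun l : ℝ => α * l) α x := by
    simpa using (hasDerivAt_id x).const_mul α
  refine (hlin.mul hpow).congr_deriv ?_
  rw [show (x ^ 2 + ρ ^ 2) ^ (-(1 - α / 2)) = (x ^ 2 + ρ ^ 2) ^ (-(1 - α / 2) - 1) * (x ^ 2 + ρ ^ 2)
    by rw [← Real.rpow_add_one hb.ne', sub_add_cancel]]
  ring

lemma one_sub_mul_div_sqrt_one_sub_sq (hα1 : α < 1) :
    (1 - α) * (ρ / √(1 - α)) ^ 2 = ρ ^ 2 := by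
  rw [div_pow, Real.sq_sqrt (by linarith), mul_div_cancel₀ _ (by linarith)]

lemma strictMonoOn_theta (hα0 : 0 < α) (hα1 : α < 1) (hρ : 0 < ρ) :
    StrictMonoOn (theta α ρ) (Icc 0 (ρ / √(1 - α))) := by
  refine strictMonoOn_of_deriv_pos (convex_Icc _ _) (continuous_theta hρ).continuousOn
    fun x hx => ?_
  rw [interior_Icc] at hx
  rw [(hasDerivAt_theta hρ x).deriv]
  have hx2 : (1 - α) * x ^ 2 < ρ ^ 2 := by
    rw [← one_sub_mul_div_sqrt_one_sub_sq (ρ := ρ) hα1]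
    exact mul_lt_mul_of_pos_left (pow_lt_pow_left₀ hx.2 hx.1.le two_ne_zero) (by linarith)
  have : 0 < (x ^ 2 + ρ ^ 2) ^ (-(1 - α / 2) - 1) := by positivity
  have : 0 < ρ ^ 2 - (1 - α) * x ^ 2 := by linarith
  positivity

lemma strictAntiOn_theta (hα0 : 0 < α) (hα1 : α < 1) (hρ : 0 < ρ) :
    StrictAntiOn (theta α ρ) (Ici (ρ / √(1 - α))) := by
  refine strictAntiOn_of_deriv_neg (convex_Ici _) (continuous_theta hρ).continuousOn
    fun x hx => ?_
  rw [interior_Ici] at hx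
  rw [(hasDerivAt_theta hρ x).deriv]
  have hx2 : ρ ^ 2 < (1 - α) * x ^ 2 := by
    rw [← one_sub_mul_div_sqrt_one_sub_sq (ρ := ρ) hα1]
    have : 0 < 1 - α := by linarith
    gcongr
    exact hx
  have : 0 < (x ^ 2 + ρ ^ 2) ^ (-(1 - α / 2) - 1) := by positivity
  exact mul_neg_of_pos_of_neg (by positivity) (by linarith)

lemma theta_eq_mul_sqrt_rpow (hρ : 0 < ρ) (x : ℝ) :
    theta α ρ x = α * x * √(x ^ 2 + ρ ^ 2) ^ (-(2 - α)) := by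
  rw [theta, show -(1 - α / 2) = -(2 - α) / 2 by ring,
    Real.rpow_div_two_eq_sqrt _ (by positivity)]

lemma theta_le_mul_sqrt_rpow (hα0 : 0 ≤ α) (hρ : 0 < ρ) (x : ℝ) :
    theta α ρ x ≤ α * √(x ^ 2 + ρ ^ 2) ^ (-(1 - α)) := by
  have hw : 0 < √(x ^ 2 + ρ ^ 2) := by positivity
  have hxw : x ≤ √(x ^ 2 + ρ ^ 2) := Real.le_sqrt_of_sq_le (by nlinarith)
  calc theta α ρ x = α * x * √(x ^ 2 + ρ ^ 2) ^ (-(2 - α)) := theta_eq_mul_sqrt_rpow hρ x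
    _ ≤ α * √(x ^ 2 + ρ ^ 2) * √(x ^ 2 + ρ ^ 2) ^ (-(2 - α)) := by gcongr
    _ = α * √(x ^ 2 + ρ ^ 2) ^ (-(1 - α)) := by
      rw [show -(1 - α) = -(2 - α) + 1 by ring, Real.rpow_add_one hw.ne']
      ring

lemma theta_le_rpow (hα0 : 0 ≤ α) (hα1 : α ≤ 1) (hρ : 0 < ρ) (hx : 0 < x) :
    theta α ρ x ≤ α * x ^ (-(1 - α)) := by
  refine (theta_le_mul_sqrt_rpow hα0 hρ x).trans ?_
  gcongr α * ?_
  exact Real.rpow_le_rpow_of_nonpos hx (Real.le_sqrt_of_sq_le (by nlinarith)) (by linarith)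

lemma tendsto_theta_atTop (hα0 : 0 ≤ α) (hα1 : α < 1) (hρ : 0 < ρ) :
    Tendsto (theta α ρ) atTop (𝓝 0) := by
  have hlim : Tendsto (fun x : ℝ => α * x ^ (-(1 - α))) atTop (𝓝 0) := by
    simpa using (tendsto_rpow_neg_atTop (by linarith : 0 < 1 - α)).const_mul α
  refine tendsto_of_tendsto_of_tendsto_of_le_of_le' tendsto_const_nhds hlim ?_ ?_
  · filter_upwards [eventually_ge_atTop 0] with x hx
    unfold theta
    positivity
  · filter_upwards [eventually_gt_atTop 0] with x hx
    exact theta_le_rpow hα0 hα1.le hρ hx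

lemma theta_le_mul (hα0 : 0 ≤ α) (hα2 : α ≤ 2) (hρ : 0 < ρ) (hx : 0 ≤ x) :
    theta α ρ x ≤ α * ρ ^ (-(2 - α)) * x := by
  rw [theta_eq_mul_sqrt_rpow hρ, mul_right_comm α x]
  gcongr α * ?_ * x
  exact Real.rpow_le_rpow_of_nonpos hρ
    (Real.le_sqrt_of_sq_le (by nlinarith)) (by linarith)

lemma mul_le_theta (hα0 : 0 ≤ α) (hα2 : α ≤ 2) (hρ : 0 < ρ) {y : ℝ} (hx : 0 ≤ x)
    (hxy : x ≤ y) : α * √(y ^ 2 + ρ ^ 2) ^ (-(2 - α)) * x ≤ theta α ρ x := by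
  rw [theta_eq_mul_sqrt_rpow hρ, mul_right_comm α x]
  gcongr α * ?_ * x
  exact Real.rpow_le_rpow_of_nonpos (by positivity) (by gcongr) (by linarith)

lemma mul_rpow_le_theta (hα0 : 0 ≤ α) (hα1 : α < 1) (hρ : 0 < ρ) (hx : 0 < x)
    (hxρ : ρ ^ 2 ≤ (1 - α) * x ^ 2) :
    α * √(2 - α) ^ (-(2 - α)) * x ^ (-(1 - α)) ≤ theta α ρ x := by
  have hw : √(x ^ 2 + ρ ^ 2) ≤ √(2 - α) * x := by
    rw [← Real.sqrt_sq hx.le, ← Real.sqrt_mul (by linarith), Real.sqrt_sq hx.le]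
    exact Real.sqrt_le_sqrt (by nlinarith)
  calc α * √(2 - α) ^ (-(2 - α)) * x ^ (-(1 - α))
      = α * x * (√(2 - α) * x) ^ (-(2 - α)) := by
        rw [Real.mul_rpow (by positivity) hx.le, show -(1 - α) = -(2 - α) + 1 by ring,
          Real.rpow_add_one hx.ne']
        ring
    _ ≤ α * x * √(x ^ 2 + ρ ^ 2) ^ (-(2 - α)) :=
        mul_le_mul_of_nonneg_left
          (Real.rpow_le_rpow_of_nonpos (by positivity) hw (by linarith)) (by positivity)
    _ = theta α ρ x := (theta_eq_mul_sqrt_rpow hρ x).symm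

lemma sqrt_le_rpow_of_theta_eq (hα0 : 0 < α) (hα1 : α < 1) (hρ : 0 < ρ) {R : ℝ} (hR : 0 < R)
    (hθ : theta α ρ x = R) : √(x ^ 2 + ρ ^ 2) ≤ (R / α) ^ (-(1 / (1 - α))) := by
  have hRα : R / α ≤ √(x ^ 2 + ρ ^ 2) ^ (-(1 - α)) := by
    rw [div_le_iff₀' hα0, ← hθ]
    exact theta_le_mul_sqrt_rpow hα0.le hρ x
  rw [show -(1 / (1 - α)) = (-(1 - α))⁻¹ by rw [one_div, inv_neg]]
  exact (Real.le_rpow_inv_iff_of_neg (by positivity) (by positivity) (by linarith)).2 hRα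

lemma rpow_le_of_theta_eq (hα0 : 0 < α) (hα1 : α < 1) (hρ : 0 < ρ) (hx : 0 < x)
    (hxρ : ρ ^ 2 ≤ (1 - α) * x ^ 2) {R : ℝ} (hR : 0 < R) (hθ : theta α ρ x = R) :
    (α * √(2 - α) ^ (-(2 - α))) ^ (1 / (1 - α)) * R ^ (-(1 / (1 - α))) ≤ x := by
  set K := α * √(2 - α) ^ (-(2 - α))
  have hK : 0 < K := mul_pos hα0 (Real.rpow_pos_of_pos (Real.sqrt_pos.2 (by linarith)) _)
  have hxR : x ^ (-(1 - α)) ≤ R / K := by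
    rw [le_div_iff₀' hK, ← hθ]
    exact mul_rpow_le_theta hα0.le hα1 hρ hx hxρ
  have h := (Real.rpow_inv_le_iff_of_neg (div_pos hR hK) hx (by linarith)).2 hxR
  rwa [← one_div, one_div_neg_eq_neg_one_div, div_rpow_neg_eq_rpow_mul hR.le hK.le] at h

lemma exists_linear_bounds_of_theta_eq (hα0 : 0 < α) (hα2 : α ≤ 2) (hρ : 0 < ρ) (a : ℝ) :
    ∃ c C : ℝ, 0 < c ∧ 0 < C ∧ ∀ R x : ℝ, 0 ≤ x → x ≤ a → theta α ρ x = R →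
      c * R ≤ x ∧ x ≤ C * R := by
  refine ⟨(α * ρ ^ (-(2 - α)))⁻¹, (α * √(a ^ 2 + ρ ^ 2) ^ (-(2 - α)))⁻¹, by positivity,
    by positivity, fun R x hx hxa hθ => ⟨?_, ?_⟩⟩
  · rw [inv_mul_le_iff₀ (by positivity), ← hθ]
    exact theta_le_mul hα0.le hα2 hρ hx
  · rw [le_inv_mul_iff₀ (by positivity), ← hθ]
    exact mul_le_theta hα0.le hα2 hρ hx hxa

lemma exists_rpow_bounds_of_theta_eq (hα0 : 0 < α) (hα1 : α < 1) (hρ : 0 < ρ) :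
    ∃ c C : ℝ, 0 < c ∧ 0 < C ∧ ∀ R x : ℝ, 0 < R → ρ / √(1 - α) < x → theta α ρ x = R →
      c * R ^ (-(1 / (1 - α))) ≤ x ∧ x ≤ C * R ^ (-(1 / (1 - α))) := by
  have h2α : 0 < √(2 - α) := Real.sqrt_pos.2 (by linarith)
  refine ⟨(α * √(2 - α) ^ (-(2 - α))) ^ (1 / (1 - α)), α ^ (1 / (1 - α)), by positivity,
    by positivity, fun R x hR hx hθ => ⟨?_, ?_⟩⟩
  · have hx0 : 0 < x := lt_of_le_of_lt (by positivity) hx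
    have hxρ : ρ ^ 2 ≤ (1 - α) * x ^ 2 := by
      rw [← one_sub_mul_div_sqrt_one_sub_sq (ρ := ρ) hα1]
      have : 0 < 1 - α := by linarith
      gcongr
    exact rpow_le_of_theta_eq hα0 hα1 hρ hx0 hxρ hR hθ
  · calc x ≤ √(x ^ 2 + ρ ^ 2) := Real.le_sqrt_of_sq_le (by nlinarith)
      _ ≤ (R / α) ^ (-(1 / (1 - α))) := sqrt_le_rpow_of_theta_eq hα0 hα1 hρ hR hθ
      _ = α ^ (1 / (1 - α)) * R ^ (-(1 / (1 - α))) := div_rpow_neg_eq_rpow_mul hR.le hα0.le _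

end Theta

theorem stmt4 (α ρ : ℝ) (hα0 : 0 < α) (hα1 : α < 1) (hρ : 0 < ρ)
    (lam0 θ0 : ℝ) (hlam0 : lam0 = ρ / Real.sqrt (1 - α)) (hθ0 : θ0 = theta α ρ lam0) :
    -- ψ_R has exactly two stationary points in (0, ∞):
    -- λ₁ ∈ (0, λ₀) and λ₂ ∈ (λ₀, ∞), the two solutions of θ(λ) = R
    (∀ R : ℝ, 0 < R → R < θ0 →
      ∃ lam1 lam2 : ℝ, lam1 ∈ Set.Ioo 0 lam0 ∧ lam2 ∈ Set.Ioi lam0 ∧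
        theta α ρ lam1 = R ∧ theta α ρ lam2 = R ∧
        (∀ lam : ℝ, 0 < lam → theta α ρ lam = R → lam = lam1 ∨ lam = lam2)) ∧
    -- comparability constants depending only on α and ρ
    (∃ c C : ℝ, 0 < c ∧ 0 < C ∧
      ∀ R lam1 lam2 : ℝ, 0 < R → R < θ0 →
        lam1 ∈ Set.Ioo 0 lam0 → theta α ρ lam1 = R →
        lam2 ∈ Set.Ioi lam0 → theta α ρ lam2 = R →
          (c * R ≤ lam1 ∧ lam1 ≤ C * R) ∧
          (c * R ^ (-(1 / (1 - α))) ≤ lam2 ∧ lam2 ≤ C * R ^ (-(1 / (1 - α))))) ∧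
    -- θ(λ) ≤ α·(λ² + ρ²)^{−(1−α)/2} for all λ ≥ 0
    (∀ lam : ℝ, 0 ≤ lam → theta α ρ lam ≤ α * (lam ^ 2 + ρ ^ 2) ^ (-((1 - α) / 2))) ∧
    -- consequently λ₂ ≤ √(λ₂² + ρ²) ≤ (R/α)^{−1/(1−α)}
    (∀ R lam2 : ℝ, 0 < R → R < θ0 → lam2 ∈ Set.Ioi lam0 → theta α ρ lam2 = R →
      lam2 ≤ Real.sqrt (lam2 ^ 2 + ρ ^ 2) ∧
      Real.sqrt (lam2 ^ 2 + ρ ^ 2) ≤ (R / α) ^ (-(1 / (1 - α)))) := by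
  subst hθ0 hlam0
  refine ⟨fun R hR hRθ => ?_, ?_, fun x _ => ?_,
    fun R x hR _ _ hθx =>
      ⟨Real.le_sqrt_of_sq_le (by nlinarith), sqrt_le_rpow_of_theta_eq hα0 hα1 hρ hR hθx⟩⟩
  · exact exists_pair_eq_of_strictMonoOn_of_strictAntiOn (continuous_theta hρ).continuousOn
      (by positivity) (strictMonoOn_theta hα0 hα1 hρ) (strictAntiOn_theta hα0 hα1 hρ)
      (by simpa [theta] using hR) hRθ
      ((tendsto_theta_atTop hα0.le hα1 hρ).eventually (gt_mem_nhds hR))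
  · obtain ⟨c₁, C₁, hc₁, hC₁, h₁⟩ :=
      exists_linear_bounds_of_theta_eq hα0 (by linarith) hρ (ρ / √(1 - α))
    obtain ⟨c₂, C₂, hc₂, hC₂, h₂⟩ := exists_rpow_bounds_of_theta_eq hα0 hα1 hρ
    refine ⟨min c₁ c₂, max C₁ C₂, by positivity, by positivity,
      fun R x₁ x₂ hR _ hx₁ hθx₁ hx₂ hθx₂ => ?_⟩
    obtain ⟨hlow₁, hup₁⟩ := h₁ R x₁ hx₁.1.le hx₁.2.le hθx₁
    obtain ⟨hlow₂, hup₂⟩ := h₂ R x₂ hR hx₂ hθx₂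
    have hRs : 0 < R ^ (-(1 / (1 - α))) := by positivity
    exact ⟨⟨(mul_le_mul_of_nonneg_right (min_le_left _ _) hR.le).trans hlow₁,
        hup₁.trans (mul_le_mul_of_nonneg_right (le_max_left _ _) hR.le)⟩,
      (mul_le_mul_of_nonneg_right (min_le_right _ _) hRs.le).trans hlow₂,
        hup₂.trans (mul_le_mul_of_nonneg_right (le_max_right _ _) hRs.le)⟩
  · rw [neg_div', Real.rpow_div_two_eq_sqrt _ (by positivity)]
    exact theta_le_mul_sqrt_rpow hα0.le hρ x
end
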